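/- Let A be a finite planar tree. The relation ⋖ on 𝓛(A), defined by B ⋖ C if and only if B ≠ C and *_B ≺ *_C in the tree B ∪_A C, is a strict linear order on 𝓛(A). -/

import Mathlib

/-- A finite planar tree: a sequence of finite linearly ordered sets `level k` with
order-preserving structure maps `parent k : level (k+1) → level k`, such that `level 0`
is a singleton and `level k` is empty for all sufficiently large `k`. -/
structure PTree where
  level : ℕ → Type
  ord : ∀ k, LinearOrder (level k)
  fin : ∀ k, Finite (level k)
  parent : ∀ k, level (k + 1) → level k
  parent_mono : ∀ (k : ℕ) (x y : level (k + 1)), (ord (k + 1)).le x y →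
    (ord k).le (parent k x) (parent k y)
  root_nonempty : Nonempty (level 0)
  root_subsingleton : ∀ x y : level 0, x = y
  bounded : ∃ N, ∀ k, N ≤ k → IsEmpty (level k)

namespace PTree

instance (T : PTree) (k : ℕ) : LinearOrder (T.level k) := T.ord k
instance (T : PTree) (k : ℕ) : Finite (T.level k) := T.fin k

/-- The set of vertices of a tree; a vertex `⟨k, x⟩` has height `k`. -/
def Vertex (T : PTree) : Type := Σ k, T.level k

/-- The `d`-fold iterated structure map (`downAux d : T_{j+d} → T_j`). -/
def downAux (T : PTree) : ∀ (d : ℕ) {j : ℕ}, T.level (j + d) → T.level j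
  | 0, _, x => x
  | d + 1, j, x => T.downAux d (T.parent (j + d) x)

/-- The image of a vertex of height `k` in the level `j ≤ k`, under the iterated
structure maps. -/
def down (T : PTree) {j k : ℕ} (h : j ≤ k) (x : T.level k) : T.level j :=
  T.downAux (k - j) (cast (congrArg T.level (by omega)) x)

/-- The relation `≺` on the vertices of a tree: `x ≺ y` iff either they have the same
height and `y < x` at that level, or `height x < height y` and the image of `y` at the
level of `x` is `≤ x`, or `height x > height y` and `y <` the image of `x` at the level
of `y`. -/
def prec (T : PTree) (x y : T.Vertex) : Prop :=
  if h : x.1 = y.1 then (cast (congrArg T.level h.symm) y.2) < x.2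
  else if h' : x.1 < y.1 then T.down (le_of_lt h') y.2 ≤ x.2
  else y.2 < T.down (by omega : y.1 ≤ x.1) x.2

end PTree


/-- A morphism of finite planar trees: levelwise order-preserving maps commuting with the
structure maps. -/
structure TreeHom (A B : PTree) where
  app : ∀ k, A.level k → B.level k
  mono : ∀ (k : ℕ) (x y : A.level k), x ≤ y → app k x ≤ app k y
  parent_comm : ∀ (k : ℕ) (x : A.level (k + 1)),
    B.parent k (app (k + 1) x) = app k (A.parent k x)

/-- Composition of tree morphisms. -/
def TreeHom.comp {A B C : PTree} (f : TreeHom A B) (g : TreeHom B C) : TreeHom A C where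
  app k x := g.app k (f.app k x)
  mono k x y h := g.mono k _ _ (f.mono k x y h)
  parent_comm k x := by rw [g.parent_comm, f.parent_comm]

/-- `b` is the new vertex of a one-point extension: it is not in the image. -/
def IsNew {A B : PTree} (f : TreeHom A B) (k : ℕ) (b : B.level k) : Prop :=
  ∀ a, f.app k a ≠ b

/-- `f : A → B` exhibits `B` as a tree obtained from `A` by adjoining a single new vertex:
`f` is a levelwise injection, at a unique level `k ≥ 1` exactly one vertex is added, and
at every other level `f` is a bijection.  This is the membership condition for `𝓛(A)`. -/
def IsOnePointExtension {A B : PTree} (f : TreeHom A B) : Prop :=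
  (∀ k, Function.Injective (f.app k)) ∧
  ∃ k, 1 ≤ k ∧ (∃! b : B.level k, IsNew f k b) ∧
    ∀ j, j ≠ k → Function.Surjective (f.app j)

/-- `(D, i, j)` realizes the levelwise union `B ∪_A C`: the square commutes, `i` and `j`
are levelwise injective, they are jointly surjective in every level, and their images
intersect exactly in (the image of) `A`. -/
def IsUnion {A B C D : PTree} (f : TreeHom A B) (g : TreeHom A C)
    (i : TreeHom B D) (j : TreeHom C D) : Prop :=
  f.comp i = g.comp j ∧
  (∀ k, Function.Injective (i.app k)) ∧ (∀ k, Function.Injective (j.app k)) ∧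
  (∀ (k : ℕ) (d : D.level k), (∃ b, i.app k b = d) ∨ (∃ c, j.app k c = d)) ∧
  (∀ (k : ℕ) (b : B.level k) (c : C.level k),
    i.app k b = j.app k c → ∃ a, f.app k a = b ∧ g.app k a = c)


/-- A one-point extension of the finite planar tree `A`: an element of `𝓛(A)`. -/
structure OnePt (A : PTree) where
  B : PTree
  incl : TreeHom A B
  isExt : IsOnePointExtension incl

/-- Two one-point extensions of `A` are the same element of `𝓛(A)` when they are
isomorphic under `A`. -/
def OnePtIso {A : PTree} (X Y : OnePt A) : Prop :=
  ∃ e : TreeHom X.B Y.B, X.incl.comp e = Y.incl ∧ ∀ k, Function.Bijective (e.app k)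

/-- The relation `⋖` on `𝓛(A)`: `X ⋖ Y` iff `X ≠ Y` (i.e. they are not isomorphic under
`A`) and the new vertex `*_X` precedes the new vertex `*_Y` in (any realization of) the
union tree `X ∪_A Y`, with respect to the vertex order `≺`. -/
def OnePt.ltdot {A : PTree} (X Y : OnePt A) : Prop :=
  ¬ OnePtIso X Y ∧
  ∀ (D : PTree) (i : TreeHom X.B D) (j : TreeHom Y.B D),
    IsUnion X.incl Y.incl i j →
    ∀ (k l : ℕ) (b : X.B.level k) (c : Y.B.level l),
      IsNew X.incl k b → IsNew Y.incl l c →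
      D.prec ⟨k, i.app k b⟩ ⟨l, j.app l c⟩

namespace PTree

lemma downAux_cast (T : PTree) {j d e : ℕ} (he : e = d) (pf : j + d = j + e)
    (x : T.level (j + d)) :
    T.downAux e (cast (congrArg T.level pf) x) = T.downAux d x := by
  subst he
  have : cast (congrArg T.level pf) x = x := by rw [cast_eq_iff_heq]
  rw [this]

lemma down_eq_downAux (T : PTree) {j d : ℕ} (h : j ≤ j + d) (x : T.level (j + d)) :
    T.down h x = T.downAux d x := by
  unfold down
  exact T.downAux_cast (by omega) (by omega) x

lemma down_refl (T : PTree) {j : ℕ} (h : j ≤ j) (x : T.level j) : T.down h x = x := by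
  have := T.down_eq_downAux (d := 0) (j := j) h x
  simpa [downAux] using this

lemma down_parent (T : PTree) {j k : ℕ} (h : j ≤ k) (hj : j ≤ k + 1) (x : T.level (k + 1)) :
    T.down hj x = T.down h (T.parent k x) := by
  obtain ⟨d, rfl⟩ : ∃ d, k = j + d := ⟨k - j, by omega⟩
  have h1 : T.down hj x = T.downAux (d + 1) x := T.down_eq_downAux (d := d + 1) hj x
  have h2 : T.down h (T.parent (j + d) x) = T.downAux d (T.parent (j + d) x) :=
    T.down_eq_downAux h _
  rw [h1, h2]
  rfl

lemma down_succ (T : PTree) {k : ℕ} (h : k ≤ k + 1) (x : T.level (k + 1)) :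
    T.down h x = T.parent k x := by
  rw [T.down_parent (le_refl k) h x, T.down_refl]

lemma down_down (T : PTree) {i j k : ℕ} (hij : i ≤ j) (hjk : j ≤ k) (x : T.level k) :
    T.down hij (T.down hjk x) = T.down (hij.trans hjk) x := by
  obtain ⟨d, rfl⟩ : ∃ d, k = j + d := ⟨k - j, by omega⟩
  induction d with
  | zero => rw [T.down_refl hjk x]
  | succ e ih =>
      have hjk' : j ≤ j + e := by omega
      have hx : T.down hjk x = T.down hjk' (T.parent (j + e) x) := T.down_parent hjk' hjk x
      rw [hx, ih hjk' (T.parent (j + e) x),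
        ← T.down_parent (hij.trans hjk') (hij.trans hjk) x]

lemma down_mono (T : PTree) {j k : ℕ} (h : j ≤ k) {x y : T.level k} (hxy : x ≤ y) :
    T.down h x ≤ T.down h y := by
  obtain ⟨d, rfl⟩ : ∃ d, k = j + d := ⟨k - j, by omega⟩
  induction d with
  | zero => rw [T.down_refl h x, T.down_refl h y]; exact hxy
  | succ e ih =>
      have h' : j ≤ j + e := by omega
      rw [T.down_parent h' h x, T.down_parent h' h y]
      exact ih h' (T.parent_mono _ _ _ hxy)

lemma prec_same (T : PTree) {k : ℕ} (x y : T.level k) :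
    T.prec ⟨k, x⟩ ⟨k, y⟩ ↔ y < x := by
  simp [prec]

lemma prec_lt (T : PTree) {j k : ℕ} (h : j < k) (x : T.level j) (y : T.level k) :
    T.prec ⟨j, x⟩ ⟨k, y⟩ ↔ T.down h.le y ≤ x := by
  unfold prec
  rw [dif_neg (Nat.ne_of_lt h), dif_pos h]

lemma prec_gt (T : PTree) {j k : ℕ} (h : k < j) (x : T.level j) (y : T.level k) :
    T.prec ⟨j, x⟩ ⟨k, y⟩ ↔ y < T.down h.le x := by
  unfold prec
  rw [dif_neg (Nat.ne_of_gt h), dif_neg (not_lt.mpr (le_of_lt h))]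

lemma prec_asymm (T : PTree) {x y : T.Vertex} (h : T.prec x y) : ¬ T.prec y x := by
  obtain ⟨p, xv⟩ := x; obtain ⟨q, yv⟩ := y
  intro h'
  rcases Nat.lt_trichotomy p q with hpq | hpq | hpq
  · rw [T.prec_lt hpq] at h
    rw [T.prec_gt hpq] at h'
    exact absurd h (not_le.mpr h')
  · subst hpq
    rw [T.prec_same] at h h'
    exact lt_asymm h h'
  · rw [T.prec_gt hpq] at h
    rw [T.prec_lt hpq] at h'
    exact absurd h' (not_le.mpr h)

lemma prec_total (T : PTree) {x y : T.Vertex} (h : x ≠ y) : T.prec x y ∨ T.prec y x := by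
  obtain ⟨p, xv⟩ := x; obtain ⟨q, yv⟩ := y
  rcases Nat.lt_trichotomy p q with hpq | hpq | hpq
  · rw [T.prec_lt hpq, T.prec_gt hpq]
    exact (le_or_gt (T.down hpq.le yv) xv)
  · subst hpq
    rw [T.prec_same, T.prec_same]
    have : xv ≠ yv := by
      intro hxy; exact h (by rw [hxy])
    rcases this.lt_or_gt with h' | h'
    · exact Or.inr h'
    · exact Or.inl h'
  · rw [T.prec_gt hpq, T.prec_lt hpq]
    exact (le_or_gt (T.down hpq.le xv) yv).symm.imp id id

lemma prec_trans (T : PTree) {x y z : T.Vertex} (hxy : T.prec x y) (hyz : T.prec y z) :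
    T.prec x z := by
  obtain ⟨p, xv⟩ := x; obtain ⟨q, yv⟩ := y; obtain ⟨r, zv⟩ := z
  rcases Nat.lt_trichotomy p q with hpq | hpq | hpq <;>
    rcases Nat.lt_trichotomy q r with hqr | hqr | hqr
  · -- p < q < r
    have hpr : p < r := hpq.trans hqr
    rw [T.prec_lt hpq] at hxy
    rw [T.prec_lt hqr] at hyz
    rw [T.prec_lt hpr]
    have := T.down_mono hpq.le hyz
    rw [T.down_down hpq.le hqr.le zv] at this
    exact this.trans hxy
  · -- p < q = r
    subst hqr
    rw [T.prec_lt hpq] at hxy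
    rw [T.prec_same] at hyz
    rw [T.prec_lt hpq]
    exact (T.down_mono hpq.le hyz.le).trans hxy
  · -- p < q, r < q
    rw [T.prec_lt hpq] at hxy
    rw [T.prec_gt hqr] at hyz
    rcases Nat.lt_trichotomy p r with hpr | hpr | hpr
    · rw [T.prec_lt hpr]
      have : T.down hpr.le zv ≤ T.down hpr.le (T.down hqr.le yv) := T.down_mono hpr.le hyz.le
      rw [T.down_down hpr.le hqr.le yv] at this
      exact this.trans hxy
    · subst hpr
      rw [T.prec_same]
      exact lt_of_lt_of_le hyz hxy
    · rw [T.prec_gt hpr]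
      have : T.down hpr.le (T.down hpq.le yv) ≤ T.down hpr.le xv := T.down_mono hpr.le hxy
      rw [T.down_down hpr.le hpq.le yv] at this
      exact lt_of_lt_of_le hyz this
  · -- p = q < r
    subst hpq
    rw [T.prec_same] at hxy
    rw [T.prec_lt hqr] at hyz
    rw [T.prec_lt hqr]
    exact hyz.trans hxy.le
  · -- p = q = r
    subst hpq; subst hqr
    rw [T.prec_same] at hxy hyz ⊢
    exact hyz.trans hxy
  · -- p = q > r
    subst hpq
    rw [T.prec_same] at hxy
    rw [T.prec_gt hqr] at hyz
    rw [T.prec_gt hqr]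
    exact hyz.trans_le (T.down_mono hqr.le hxy.le)
  · -- q < p, q < r
    rw [T.prec_gt hpq] at hxy
    rw [T.prec_lt hqr] at hyz
    rcases Nat.lt_trichotomy p r with hpr | hpr | hpr
    · rw [T.prec_lt hpr]
      by_contra hcon
      push_neg at hcon
      have h1 : T.down hpq.le xv ≤ T.down hpq.le (T.down hpr.le zv) :=
        T.down_mono hpq.le hcon.le
      rw [T.down_down hpq.le hpr.le zv] at h1
      have h2 : T.down (hpq.le.trans hpr.le) zv = T.down hqr.le zv := rfl
      rw [h2] at h1
      exact absurd (h1.trans hyz) (not_le.mpr hxy)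
    · subst hpr
      rw [T.prec_same]
      by_contra hcon
      push_neg at hcon
      have h1 : T.down hpq.le xv ≤ T.down hpq.le zv := T.down_mono hpq.le hcon
      exact absurd (h1.trans hyz) (not_le.mpr hxy)
    · rw [T.prec_gt hpr]
      by_contra hcon
      push_neg at hcon
      have h1 : T.down hqr.le (T.down hpr.le xv) ≤ T.down hqr.le zv := T.down_mono hqr.le hcon
      rw [T.down_down hqr.le hpr.le xv] at h1
      exact absurd (h1.trans hyz) (not_le.mpr hxy)
  · -- q < p, q = r
    subst hqr
    rw [T.prec_gt hpq] at hxy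
    rw [T.prec_same] at hyz
    rw [T.prec_gt hpq]
    exact hyz.trans hxy
  · -- q < p, r < q
    have hpr : r < p := hqr.trans hpq
    rw [T.prec_gt hpq] at hxy
    rw [T.prec_gt hqr] at hyz
    rw [T.prec_gt hpr]
    have := T.down_mono hqr.le hxy.le
    rw [T.down_down hqr.le hpq.le xv] at this
    exact hyz.trans_le this

end PTree

namespace PTree

lemma hom_strictMono {T S : PTree} (φ : TreeHom T S) (hinj : ∀ m, Function.Injective (φ.app m))
    (m : ℕ) : StrictMono (φ.app m) := by
  intro x y hxy
  rcases lt_or_eq_of_le (φ.mono m x y hxy.le) with h | h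
  · exact h
  · exact absurd (hinj m h) (ne_of_lt hxy)

lemma hom_lt_iff {T S : PTree} (φ : TreeHom T S) (hinj : ∀ m, Function.Injective (φ.app m))
    (m : ℕ) (x y : T.level m) : φ.app m x < φ.app m y ↔ x < y :=
  (hom_strictMono φ hinj m).lt_iff_lt

lemma hom_le_iff {T S : PTree} (φ : TreeHom T S) (hinj : ∀ m, Function.Injective (φ.app m))
    (m : ℕ) (x y : T.level m) : φ.app m x ≤ φ.app m y ↔ x ≤ y :=
  (hom_strictMono φ hinj m).le_iff_le

lemma hom_down {T S : PTree} (φ : TreeHom T S) {j k : ℕ} (h : j ≤ k) (x : T.level k) :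
    φ.app j (T.down h x) = S.down h (φ.app k x) := by
  obtain ⟨d, rfl⟩ : ∃ d, k = j + d := ⟨k - j, by omega⟩
  induction d with
  | zero =>
      rw [T.down_refl h x]
      exact (S.down_refl h _).symm
  | succ e ih =>
      have h' : j ≤ j + e := by omega
      rw [T.down_parent h' h x, S.down_parent h' h (φ.app (j + (e + 1)) x), ih h']
      exact congrArg (S.down h') (φ.parent_comm (j + e) x).symm

lemma hom_prec {T S : PTree} (φ : TreeHom T S) (hinj : ∀ m, Function.Injective (φ.app m))
    {p q : ℕ} (x : T.level p) (y : T.level q) :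
    S.prec ⟨p, φ.app p x⟩ ⟨q, φ.app q y⟩ ↔ T.prec ⟨p, x⟩ ⟨q, y⟩ := by
  rcases Nat.lt_trichotomy p q with hpq | hpq | hpq
  · rw [S.prec_lt hpq, T.prec_lt hpq, ← hom_down φ hpq.le y, hom_le_iff φ hinj]
  · subst hpq
    rw [S.prec_same, T.prec_same, hom_lt_iff φ hinj]
  · rw [S.prec_gt hpq, T.prec_gt hpq, ← hom_down φ hpq.le x, hom_lt_iff φ hinj]

end PTree

lemma TreeHom.ext' {A B : PTree} {f g : TreeHom A B} (h : f.app = g.app) : f = g := by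
  cases f; cases g; simp_all

lemma TreeHom.comp_app {A B C : PTree} (f : TreeHom A B) (g : TreeHom B C) (k : ℕ)
    (a : A.level k) : (f.comp g).app k a = g.app k (f.app k a) := rfl

namespace OnePt

variable {A : PTree} (X : OnePt A)

/-- The level of the new vertex. -/
noncomputable def k : ℕ := X.isExt.2.choose

lemma one_le_k : 1 ≤ X.k := X.isExt.2.choose_spec.1

/-- The new vertex. -/
noncomputable def newb : X.B.level X.k := X.isExt.2.choose_spec.2.1.choose

lemma newb_new : IsNew X.incl X.k X.newb := X.isExt.2.choose_spec.2.1.choose_spec.1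

lemma newb_uniq {x : X.B.level X.k} (h : IsNew X.incl X.k x) : x = X.newb :=
  X.isExt.2.choose_spec.2.1.choose_spec.2 x h

lemma surj {m : ℕ} (h : m ≠ X.k) : Function.Surjective (X.incl.app m) :=
  X.isExt.2.choose_spec.2.2 m h

lemma inj (m : ℕ) : Function.Injective (X.incl.app m) := X.isExt.1 m

lemma new_level {m : ℕ} {x : X.B.level m} (h : IsNew X.incl m x) : m = X.k := by
  by_contra hm
  obtain ⟨a, ha⟩ := X.surj hm x
  exact h a ha

end OnePt

namespace OnePt

variable {A : PTree}

/-- The cut of `A`-vertices determined by a new vertex `b` at level `k`: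
those whose image the new vertex precedes. -/
def cut' (X : OnePt A) (k : ℕ) (b : X.B.level k) : Set A.Vertex :=
  {v | X.B.prec ⟨v.1, X.incl.app v.1 v.2⟩ ⟨k, b⟩}

lemma cut'_lower (X : OnePt A) (k : ℕ) (b : X.B.level k) {v w : A.Vertex}
    (hvw : A.prec v w) (hw : w ∈ X.cut' k b) : v ∈ X.cut' k b := by
  obtain ⟨p, a⟩ := v; obtain ⟨q, a'⟩ := w
  have h1 : X.B.prec ⟨p, X.incl.app p a⟩ ⟨q, X.incl.app q a'⟩ :=
    (PTree.hom_prec X.incl X.inj a a').mpr hvw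
  exact X.B.prec_trans h1 hw

lemma cut'_comparable (X Y : OnePt A) (k l : ℕ) (b : X.B.level k) (c : Y.B.level l) :
    X.cut' k b ⊆ Y.cut' l c ∨ Y.cut' l c ⊆ X.cut' k b := by
  by_contra hcon
  push_neg at hcon
  obtain ⟨ha', hb'⟩ := hcon
  rw [Set.not_subset] at ha' hb'
  obtain ⟨v, hv1, hv2⟩ := ha'
  obtain ⟨w, hw1, hw2⟩ := hb'
  have hne : v ≠ w := fun h => hv2 (h ▸ hw1)
  rcases A.prec_total hne with h | h
  · exact hv2 (Y.cut'_lower l c h hw1)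
  · exact hw2 (X.cut'_lower k b h hv1)

lemma union_symm {X Y : OnePt A} {D : PTree} {i : TreeHom X.B D} {j : TreeHom Y.B D}
    (hU : IsUnion X.incl Y.incl i j) : IsUnion Y.incl X.incl j i := by
  obtain ⟨hsq, hi, hj, hsurj, hint⟩ := hU
  exact ⟨hsq.symm, hj, hi, fun m d => (hsurj m d).symm,
    fun m c b h => by obtain ⟨a, h1, h2⟩ := hint m b c h.symm; exact ⟨a, h2, h1⟩⟩

lemma union_square {X Y : OnePt A} {D : PTree} {i : TreeHom X.B D} {j : TreeHom Y.B D}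
    (hU : IsUnion X.incl Y.incl i j) (m : ℕ) (a : A.level m) :
    i.app m (X.incl.app m a) = j.app m (Y.incl.app m a) := by
  have := congrArg TreeHom.app hU.1
  exact congrFun (congrFun this m) a

variable {X Y : OnePt A} {D : PTree} {i : TreeHom X.B D} {j : TreeHom Y.B D}
  {k l : ℕ} {b : X.B.level k} {c : Y.B.level l}

lemma prec_of_cut_ssubset (hU : IsUnion X.incl Y.incl i j) (hb : IsNew X.incl k b)
    (h : X.cut' k b ⊂ Y.cut' l c) :
    D.prec ⟨k, i.app k b⟩ ⟨l, j.app l c⟩ := by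
  obtain ⟨hsub, hne⟩ := h
  rw [Set.not_subset] at hne
  obtain ⟨v, hv1, hv2⟩ := hne
  obtain ⟨p, a⟩ := v
  have h1 : D.prec ⟨p, j.app p (Y.incl.app p a)⟩ ⟨l, j.app l c⟩ :=
    (PTree.hom_prec j hU.2.2.1 _ _).mpr hv1
  have h2 : ¬ D.prec ⟨p, i.app p (X.incl.app p a)⟩ ⟨k, i.app k b⟩ := fun hcon =>
    hv2 ((PTree.hom_prec i hU.2.1 _ _).mp hcon)
  rw [union_square hU p a] at h2
  have hne2 : (⟨k, i.app k b⟩ : D.Vertex) ≠ ⟨p, j.app p (Y.incl.app p a)⟩ := by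
    intro hcon
    obtain ⟨rfl, h3⟩ := Sigma.mk.inj_iff.mp hcon
    have h4 : i.app k b = j.app k (Y.incl.app k a) := eq_of_heq h3
    rw [← union_square hU k a] at h4
    exact hb a (hU.2.1 k h4.symm)
  rcases D.prec_total hne2 with h3 | h3
  · exact D.prec_trans h3 h1
  · exact absurd h3 h2

lemma prec_of_cut_eq_gt (hU : IsUnion X.incl Y.incl i j) (hb : IsNew X.incl k b)
    (heq : X.cut' k b = Y.cut' l c) (hlk : l < k) :
    D.prec ⟨k, i.app k b⟩ ⟨l, j.app l c⟩ := by
  have hlX : l ≠ X.k := by rw [← X.new_level hb]; omega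
  obtain ⟨a, ha⟩ := X.surj hlX (X.B.down hlk.le b)
  have hv : (⟨l, a⟩ : A.Vertex) ∈ X.cut' k b := by
    show X.B.prec ⟨l, X.incl.app l a⟩ ⟨k, b⟩
    rw [X.B.prec_lt hlk, ha]
  rw [heq] at hv
  have hv2 : c < Y.incl.app l a := (Y.B.prec_same _ _).mp hv
  rw [D.prec_gt hlk]
  rw [← PTree.hom_down i hlk.le b, ← ha, union_square hU l a]
  exact (PTree.hom_lt_iff j hU.2.2.1 l c _).mpr hv2

end OnePt

namespace OnePt

variable {A : PTree}

lemma new_uniq' (X : OnePt A) {m : ℕ} {x y : X.B.level m} (hx : IsNew X.incl m x)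
    (hy : IsNew X.incl m y) : x = y := by
  have hm := X.new_level hx
  subst hm
  rw [X.newb_uniq hx, X.newb_uniq hy]

lemma data_of_iso {X Y : OnePt A} (hiso : OnePtIso X Y) {k l : ℕ} {b : X.B.level k}
    {c : Y.B.level l} (hb : IsNew X.incl k b) (hc : IsNew Y.incl l c) :
    k = l ∧ X.cut' k b = Y.cut' l c := by
  obtain ⟨e, hsq, hbij⟩ := hiso
  have hsq' : ∀ m a, e.app m (X.incl.app m a) = Y.incl.app m a := fun m a =>
    congrFun (congrFun (congrArg TreeHom.app hsq) m) a
  have heinj : ∀ m, Function.Injective (e.app m) := fun m => (hbij m).1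
  have hebnew : IsNew Y.incl k (e.app k b) := by
    intro a ha
    rw [← hsq' k a] at ha
    exact hb a (heinj k ha)
  have hkl : k = l := (Y.new_level hebnew).trans (Y.new_level hc).symm
  subst hkl
  have hebc : e.app k b = c := Y.new_uniq' hebnew hc
  refine ⟨rfl, Set.ext fun v => ?_⟩
  obtain ⟨p, a⟩ := v
  show X.B.prec ⟨p, X.incl.app p a⟩ ⟨k, b⟩ ↔ Y.B.prec ⟨p, Y.incl.app p a⟩ ⟨k, c⟩
  rw [← PTree.hom_prec e heinj (X.incl.app p a) b, hsq' p a, hebc]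

end OnePt

namespace OnePt

variable {A : PTree}

attribute [local instance] Classical.propDecidable

/-- The underlying levelwise map of the isomorphism between two one-point extensions
with identical data. -/
noncomputable def isoApp (X Y : OnePt A) {k : ℕ} (c : Y.B.level k)
    (hnl : ∀ (m : ℕ) (x : X.B.level m), IsNew X.incl m x → m = k)
    (m : ℕ) (x : X.B.level m) : Y.B.level m :=
  if h : ∃ a, X.incl.app m a = x then Y.incl.app m h.choose
  else cast (congrArg Y.B.level (hnl m x (fun a ha => h ⟨a, ha⟩)).symm) c

lemma isoApp_f (X Y : OnePt A) {k : ℕ} (c : Y.B.level k)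
    (hnl : ∀ (m : ℕ) (x : X.B.level m), IsNew X.incl m x → m = k)
    (m : ℕ) (a : A.level m) :
    isoApp X Y c hnl m (X.incl.app m a) = Y.incl.app m a := by
  rw [isoApp, dif_pos (⟨a, rfl⟩ : ∃ a', X.incl.app m a' = X.incl.app m a)]
  exact congrArg (Y.incl.app m)
    (X.inj m (⟨a, rfl⟩ : ∃ a', X.incl.app m a' = X.incl.app m a).choose_spec)

lemma isoApp_new (X Y : OnePt A) {k : ℕ} (c : Y.B.level k)
    (hnl : ∀ (m : ℕ) (x : X.B.level m), IsNew X.incl m x → m = k)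
    (x : X.B.level k) (hx : IsNew X.incl k x) :
    isoApp X Y c hnl k x = c := by
  rw [isoApp, dif_neg (fun h => hx h.choose h.choose_spec)]
  rw [cast_eq_iff_heq]

lemma iso_of_data_eq {X Y : OnePt A} {k l : ℕ} {b : X.B.level k} {c : Y.B.level l}
    (hb : IsNew X.incl k b) (hc : IsNew Y.incl l c) (hkl : k = l)
    (heq : X.cut' k b = Y.cut' l c) : OnePtIso X Y := by
  subst hkl
  have hkX : k = X.k := X.new_level hb
  have hkY : k = Y.k := Y.new_level hc
  have hk1 : 1 ≤ k := hkX ▸ X.one_le_k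
  have hm : k - 1 < k := by omega
  have hmem : ∀ (p : ℕ) (a : A.level p),
      X.B.prec ⟨p, X.incl.app p a⟩ ⟨k, b⟩ ↔ Y.B.prec ⟨p, Y.incl.app p a⟩ ⟨k, c⟩ :=
    fun p a => Set.ext_iff.mp heq ⟨p, a⟩
  have h_gt : ∀ a : A.level k, (b < X.incl.app k a ↔ c < Y.incl.app k a) := by
    intro a; have := hmem k a; rwa [X.B.prec_same, Y.B.prec_same] at this
  have h_lt : ∀ a : A.level k, (X.incl.app k a < b ↔ Y.incl.app k a < c) := by
    intro a
    constructor
    · intro h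
      rcases lt_trichotomy (Y.incl.app k a) c with h' | h' | h'
      · exact h'
      · exact absurd h' (hc a)
      · exact absurd ((h_gt a).mpr h') (not_lt.mpr h.le)
    · intro h
      rcases lt_trichotomy (X.incl.app k a) b with h' | h' | h'
      · exact h'
      · exact absurd h' (hb a)
      · exact absurd ((h_gt a).mp h') (not_lt.mpr h.le)
  obtain ⟨ab, hab⟩ := X.surj (show k - 1 ≠ X.k by omega) (X.B.down hm.le b)
  obtain ⟨ac, hac⟩ := Y.surj (show k - 1 ≠ Y.k by omega) (Y.B.down hm.le c)
  have habc : ab = ac := by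
    have h1 : ∀ a : A.level (k - 1), (ab ≤ a ↔ ac ≤ a) := by
      intro a
      have h2 := hmem (k - 1) a
      rw [X.B.prec_lt hm, Y.B.prec_lt hm, ← hab, ← hac,
        PTree.hom_le_iff X.incl X.inj, PTree.hom_le_iff Y.incl Y.inj] at h2
      exact h2
    exact le_antisymm ((h1 ac).mpr le_rfl) ((h1 ab).mp le_rfl)
  have hnl : ∀ (m : ℕ) (x : X.B.level m), IsNew X.incl m x → m = k :=
    fun m x hx => (X.new_level hx).trans hkX.symm
  refine ⟨⟨isoApp X Y c hnl, ?_, ?_⟩, ?_, ?_⟩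
  · -- mono
    intro m x y hxy
    by_cases hx : ∃ a, X.incl.app m a = x
    · obtain ⟨a, rfl⟩ := hx
      by_cases hy : ∃ a, X.incl.app m a = y
      · obtain ⟨a', rfl⟩ := hy
        rw [isoApp_f, isoApp_f]
        exact (PTree.hom_le_iff Y.incl Y.inj m a a').mpr
          ((PTree.hom_le_iff X.incl X.inj m a a').mp hxy)
      · have hyn : IsNew X.incl m y := fun a' ha' => hy ⟨a', ha'⟩
        have hmk : m = k := hnl m y hyn
        cases hmk
        have hyb : y = b := X.new_uniq' hyn hb
        rw [isoApp_f, isoApp_new X Y c hnl y hyn]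
        subst hyb
        exact ((h_lt a).mp (lt_of_le_of_ne hxy (hb a))).le
    · have hxn : IsNew X.incl m x := fun a ha => hx ⟨a, ha⟩
      have hmk : m = k := hnl m x hxn
      cases hmk
      have hxb : x = b := X.new_uniq' hxn hb
      by_cases hy : ∃ a, X.incl.app _ a = y
      · obtain ⟨a, rfl⟩ := hy
        rw [isoApp_f, isoApp_new X Y c hnl x hxn]
        subst hxb
        have h1 := lt_of_le_of_ne hxy (fun h => hb a h.symm)
        exact ((h_gt a).mp h1).le
      · have hyn : IsNew X.incl _ y := fun a ha => hy ⟨a, ha⟩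
        have hxy' : x = y := hxb.trans (X.new_uniq' hyn hb).symm
        rw [hxy']
  · -- parent_comm
    intro m x
    by_cases hx : ∃ a, X.incl.app (m + 1) a = x
    · obtain ⟨a, rfl⟩ := hx
      rw [isoApp_f, Y.incl.parent_comm, X.incl.parent_comm, isoApp_f]
    · have hxn : IsNew X.incl (m + 1) x := fun a ha => hx ⟨a, ha⟩
      have hmk : m + 1 = k := hnl (m + 1) x hxn
      cases hmk
      have hxb : x = b := X.new_uniq' hxn hb
      subst hxb
      rw [isoApp_new X Y c hnl x hxn]
      have hab' : X.incl.app m ab = X.B.parent m x := hab.trans (X.B.down_succ hm.le x)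
      have hac' : Y.incl.app m ac = Y.B.parent m c := hac.trans (Y.B.down_succ hm.le c)
      rw [← hab', isoApp_f, habc, hac']
  · -- square
    apply TreeHom.ext'
    funext m a
    exact isoApp_f X Y c hnl m a
  · -- bijective
    intro m
    constructor
    · intro x y hxy
      replace hxy : isoApp X Y c hnl m x = isoApp X Y c hnl m y := hxy
      by_cases hx : ∃ a, X.incl.app m a = x
      · obtain ⟨a, rfl⟩ := hx
        by_cases hy : ∃ a, X.incl.app m a = y
        · obtain ⟨a', rfl⟩ := hy
          rw [isoApp_f, isoApp_f] at hxy
          exact congrArg (X.incl.app m) (Y.inj m hxy)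
        · have hyn : IsNew X.incl m y := fun a' ha' => hy ⟨a', ha'⟩
          have hmk : m = k := hnl m y hyn
          cases hmk
          rw [isoApp_f, isoApp_new X Y c hnl y hyn] at hxy
          exact absurd hxy (hc a)
      · have hxn : IsNew X.incl m x := fun a ha => hx ⟨a, ha⟩
        have hmk : m = k := hnl m x hxn
        cases hmk
        by_cases hy : ∃ a, X.incl.app _ a = y
        · obtain ⟨a, rfl⟩ := hy
          rw [isoApp_f, isoApp_new X Y c hnl x hxn] at hxy
          exact absurd hxy.symm (hc a)
        · have hyn : IsNew X.incl _ y := fun a ha => hy ⟨a, ha⟩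
          exact (X.new_uniq' hxn hb).trans (X.new_uniq' hyn hb).symm
    · intro y
      show ∃ x, isoApp X Y c hnl m x = y
      by_cases hy : ∃ a, Y.incl.app m a = y
      · obtain ⟨a, rfl⟩ := hy
        exact ⟨X.incl.app m a, isoApp_f X Y c hnl m a⟩
      · have hyn : IsNew Y.incl m y := fun a ha => hy ⟨a, ha⟩
        have hmk : m = k := (Y.new_level hyn).trans hkY.symm
        cases hmk
        have hyc : y = c := Y.new_uniq' hyn hc
        exact ⟨b, by rw [isoApp_new X Y c hnl b hb, hyc]⟩

end OnePt

namespace OnePt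

variable {A : PTree}

attribute [local instance] Classical.propDecidable

/-- The levels of the union tree: `X.B` together with the new points of `Y.B`. -/
abbrev ULev (X Y : OnePt A) (m : ℕ) : Type :=
  X.B.level m ⊕ {y : Y.B.level m // IsNew Y.incl m y}

lemma ULev_inr_sub (X Y : OnePt A) {m : ℕ} (c c' : {y : Y.B.level m // IsNew Y.incl m y}) :
    c = c' := Subtype.ext (Y.new_uniq' c.2 c'.2)

/-- `x ∈ X.B` lies strictly below the position of the new vertex `c` of `Y.B`. -/
def QQ (X Y : OnePt A) (m : ℕ) (x : X.B.level m) (c : Y.B.level m) : Prop :=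
  ((∀ a, X.incl.app m a < x → Y.incl.app m a < c) ∧
    ∃ a, Y.incl.app m a < c ∧ x ≤ X.incl.app m a) ∨
  ((∀ a, X.incl.app m a < x ↔ Y.incl.app m a < c) ∧
    ∃ a, Y.incl.app (m - 1) a = Y.B.down (Nat.sub_le m 1) c ∧
      (X.B.down (Nat.sub_le m 1) x < X.incl.app (m - 1) a ∨
       (X.B.down (Nat.sub_le m 1) x = X.incl.app (m - 1) a ∧ IsNew X.incl m x)))

lemma Q_f (X Y : OnePt A) {m : ℕ} {c : Y.B.level m} (hc : IsNew Y.incl m c) (a : A.level m) :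
    QQ X Y m (X.incl.app m a) c ↔ Y.incl.app m a < c := by
  constructor
  · rintro (⟨hsub, a1, hga1, hle⟩ | ⟨hseq, a0, hga0, hcmp⟩)
    · have h1 : a ≤ a1 := (PTree.hom_le_iff X.incl X.inj m a a1).mp hle
      exact lt_of_le_of_lt ((PTree.hom_le_iff Y.incl Y.inj m a a1).mpr h1) hga1
    · rcases hcmp with h1 | ⟨h1, h2⟩
      · rw [← PTree.hom_down X.incl (Nat.sub_le m 1) a] at h1
        have h2 : A.down (Nat.sub_le m 1) a < a0 :=
          (PTree.hom_lt_iff X.incl X.inj _ _ _).mp h1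
        by_contra hcon
        have h3 : c < Y.incl.app m a := lt_of_le_of_ne (not_lt.mp hcon) (fun h => hc a h.symm)
        have h4 : Y.B.down (Nat.sub_le m 1) c ≤ Y.B.down (Nat.sub_le m 1) (Y.incl.app m a) :=
          Y.B.down_mono _ h3.le
        rw [← PTree.hom_down Y.incl (Nat.sub_le m 1) a, ← hga0] at h4
        have h5 : a0 ≤ A.down (Nat.sub_le m 1) a := (PTree.hom_le_iff Y.incl Y.inj _ _ _).mp h4
        exact absurd h2 (not_lt.mpr h5)
      · exact absurd rfl (h2 a)
  · intro h
    left
    refine ⟨fun a' ha' => ?_, a, h, le_rfl⟩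
    have h1 : a' < a := (PTree.hom_lt_iff X.incl X.inj m a' a).mp ha'
    exact lt_trans ((PTree.hom_lt_iff Y.incl Y.inj m a' a).mpr h1) h

lemma Q_mono (X Y : OnePt A) {m : ℕ} {x x' : X.B.level m} {c : Y.B.level m}
    (hx' : x' ≤ x) (h : QQ X Y m x c) : QQ X Y m x' c := by
  rcases h with ⟨hsub, a0, hga0, hxa0⟩ | ⟨hseq, a0, hga0, hcmp⟩
  · exact Or.inl ⟨fun a ha => hsub a (lt_of_lt_of_le ha hx'), a0, hga0, hx'.trans hxa0⟩
  · rcases eq_or_lt_of_le hx' with rfl | hlt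
    · exact Or.inr ⟨hseq, a0, hga0, hcmp⟩
    have hsub' : ∀ a, X.incl.app m a < x' → Y.incl.app m a < c :=
      fun a ha => (hseq a).mp (ha.trans hlt)
    by_cases hfull : ∀ a, Y.incl.app m a < c → X.incl.app m a < x'
    · right
      refine ⟨fun a => ⟨hsub' a, hfull a⟩, a0, hga0, ?_⟩
      have hdmono : X.B.down (Nat.sub_le m 1) x' ≤ X.B.down (Nat.sub_le m 1) x :=
        X.B.down_mono _ hlt.le
      rcases hcmp with h1 | ⟨h1, hxnew⟩
      · exact Or.inl (lt_of_le_of_lt hdmono h1)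
      · rcases lt_or_eq_of_le hdmono with h2 | h2
        · exact Or.inl (h2.trans_eq h1)
        · by_cases hx'img : ∃ a, X.incl.app m a = x'
          · obtain ⟨a, rfl⟩ := hx'img
            exact absurd (hfull a ((hseq a).mp hlt)) (lt_irrefl _)
          · exact Or.inr ⟨h2.trans h1, fun a ha => hx'img ⟨a, ha⟩⟩
    · push_neg at hfull
      obtain ⟨a1, hga1, hnlt⟩ := hfull
      exact Or.inl ⟨hsub', a1, hga1, hnlt⟩

lemma Q_parent_le (X Y : OnePt A) {m : ℕ} {x : X.B.level (m + 1)} {c : Y.B.level (m + 1)}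
    {ac : A.level m} (hac : Y.incl.app m ac = Y.B.parent m c) (h : QQ X Y (m + 1) x c) :
    X.B.parent m x ≤ X.incl.app m ac := by
  rcases h with ⟨hsub, a0, hga0, hxa0⟩ | ⟨hseq, a0, hga0, hcmp⟩
  · have h1 : X.B.parent m x ≤ X.B.parent m (X.incl.app (m + 1) a0) :=
      X.B.parent_mono m _ _ hxa0
    rw [X.incl.parent_comm] at h1
    have h2 : Y.B.parent m (Y.incl.app (m + 1) a0) ≤ Y.B.parent m c :=
      Y.B.parent_mono m _ _ hga0.le
    rw [Y.incl.parent_comm, ← hac] at h2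
    have h3 : A.parent m a0 ≤ ac := (PTree.hom_le_iff Y.incl Y.inj m _ _).mp h2
    exact h1.trans ((PTree.hom_le_iff X.incl X.inj m _ _).mpr h3)
  · have hds : Y.B.down (Nat.sub_le (m + 1) 1) c = Y.B.parent m c := Y.B.down_succ _ c
    have hga0' : Y.incl.app m a0 = Y.incl.app m ac := by
      rw [hac, ← hds]
      exact hga0
    have ha0ac : a0 = ac := Y.inj m hga0'
    subst ha0ac
    have hdx : X.B.down (Nat.sub_le (m + 1) 1) x = X.B.parent m x := X.B.down_succ _ x
    rcases hcmp with h1 | ⟨h1, _⟩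
    · rw [hdx] at h1; exact h1.le
    · rw [hdx] at h1; exact h1.le
  -- done

lemma Q_parent_ge (X Y : OnePt A) {m : ℕ} {x : X.B.level (m + 1)} {c : Y.B.level (m + 1)}
    {ac : A.level m} (hc : IsNew Y.incl (m + 1) c)
    (hac : Y.incl.app m ac = Y.B.parent m c) (h : ¬ QQ X Y (m + 1) x c) :
    X.incl.app m ac ≤ X.B.parent m x := by
  by_cases h1 : ∀ a, X.incl.app (m + 1) a < x → Y.incl.app (m + 1) a < c
  · have h2 : ∀ a, Y.incl.app (m + 1) a < c → X.incl.app (m + 1) a < x := by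
      intro a ha
      by_contra hcon
      exact h (Or.inl ⟨h1, a, ha, not_lt.mp hcon⟩)
    have hseq : ∀ a, X.incl.app (m + 1) a < x ↔ Y.incl.app (m + 1) a < c :=
      fun a => ⟨h1 a, h2 a⟩
    have hga0 : Y.incl.app ((m + 1) - 1) ac = Y.B.down (Nat.sub_le (m + 1) 1) c := by
      rw [Y.B.down_succ]; exact hac
    by_contra hcon
    exact h (Or.inr ⟨hseq, ac, hga0, Or.inl (by
      rw [X.B.down_succ]; exact lt_of_not_ge hcon)⟩)
  · push_neg at h1
    obtain ⟨a1, hfa1, hnga1⟩ := h1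
    have h3 : c < Y.incl.app (m + 1) a1 := lt_of_le_of_ne hnga1 (fun h' => hc a1 h'.symm)
    have h4 : Y.B.parent m c ≤ Y.B.parent m (Y.incl.app (m + 1) a1) := Y.B.parent_mono m _ _ h3.le
    rw [Y.incl.parent_comm, ← hac] at h4
    have h5 : ac ≤ A.parent m a1 := (PTree.hom_le_iff Y.incl Y.inj m _ _).mp h4
    have h6 : X.incl.app m ac ≤ X.incl.app m (A.parent m a1) :=
      (PTree.hom_le_iff X.incl X.inj m _ _).mpr h5
    rw [← X.incl.parent_comm] at h6
    exact h6.trans (X.B.parent_mono m _ _ hfa1.le)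

/-- The order relation on the levels of the union tree. -/
def ULe (X Y : OnePt A) (m : ℕ) : ULev X Y m → ULev X Y m → Prop
  | .inl x, .inl x' => x ≤ x'
  | .inl x, .inr c => QQ X Y m x c.1
  | .inr c, .inl x => ¬ QQ X Y m x c.1
  | .inr _, .inr _ => True

noncomputable def UOrd (X Y : OnePt A) (m : ℕ) : LinearOrder (ULev X Y m) where
  le := ULe X Y m
  lt a b := ULe X Y m a b ∧ ¬ ULe X Y m b a
  le_refl a := by cases a <;> simp [ULe]
  le_trans a b c hab hbc := by
    cases a with
    | inl x =>
      cases b with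
      | inl x' =>
        cases c with
        | inl x'' => exact le_trans (hab : x ≤ x') hbc
        | inr c0 => exact Q_mono X Y hab hbc
      | inr c0 =>
        cases c with
        | inl x'' =>
          rcases le_or_gt x x'' with h | h
          · exact h
          · exact absurd (Q_mono X Y h.le hab) hbc
        | inr c1 => rw [show c1 = c0 from ULev_inr_sub X Y c1 c0]; exact hab
    | inr c0 =>
      cases b with
      | inl x' =>
        cases c with
        | inl x'' => exact fun hq => hab (Q_mono X Y hbc hq)
        | inr c1 => trivial
      | inr c1 =>
        cases c with
        | inl x'' => rw [show c0 = c1 from ULev_inr_sub X Y c0 c1]; exact hbc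
        | inr c2 => trivial
  lt_iff_le_not_ge _ _ := Iff.rfl
  le_antisymm a b hab hba := by
    cases a with
    | inl x =>
      cases b with
      | inl x' => exact congrArg Sum.inl (le_antisymm hab hba)
      | inr c0 => exact absurd hab hba
    | inr c0 =>
      cases b with
      | inl x' => exact absurd hba hab
      | inr c1 => exact congrArg Sum.inr (ULev_inr_sub X Y c0 c1)
  le_total a b := by
    cases a with
    | inl x =>
      cases b with
      | inl x' => exact le_total x x'
      | inr c0 => exact (em _)
    | inr c0 =>
      cases b with
      | inl x' => exact (em _).symm
      | inr c1 => exact Or.inl trivial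
  toDecidableLE := fun _ _ => Classical.propDecidable _

lemma ULe_refl (X Y : OnePt A) (m : ℕ) (z : ULev X Y m) : ULe X Y m z z := by
  cases z with
  | inl x => exact le_refl x
  | inr c => trivial

/-- The parent maps of the union tree. -/
noncomputable def UParent (X Y : OnePt A) (m : ℕ) : ULev X Y (m + 1) → ULev X Y m
  | .inl x => .inl (X.B.parent m x)
  | .inr c =>
      if h : ∃ a, Y.incl.app m a = Y.B.parent m c.1 then .inl (X.incl.app m h.choose)
      else .inr ⟨Y.B.parent m c.1, fun a ha => h ⟨a, ha⟩⟩

lemma UParent_inr (X Y : OnePt A) {m : ℕ}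
    (c : {y : Y.B.level (m + 1) // IsNew Y.incl (m + 1) y}) :
    UParent X Y m (Sum.inr c) =
      (if h : ∃ a, Y.incl.app m a = Y.B.parent m c.1 then .inl (X.incl.app m h.choose)
       else .inr ⟨Y.B.parent m c.1, fun a ha => h ⟨a, ha⟩⟩) := rfl

lemma Uparent_exists (X Y : OnePt A) {m : ℕ}
    (c : {y : Y.B.level (m + 1) // IsNew Y.incl (m + 1) y}) :
    ∃ a, Y.incl.app m a = Y.B.parent m c.1 := by
  have hmY : m + 1 = Y.k := Y.new_level c.2
  exact Y.surj (by omega) _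

/-- The union tree itself. -/
noncomputable def UTree (X Y : OnePt A) : PTree where
  level m := ULev X Y m
  ord m := UOrd X Y m
  fin m := by
    have : Finite (X.B.level m) := X.B.fin m
    have : Finite (Y.B.level m) := Y.B.fin m
    infer_instance
  parent := UParent X Y
  parent_mono m z z' hzz' := by
    cases z with
    | inl x =>
      cases z' with
      | inl x' => exact X.B.parent_mono m x x' hzz'
      | inr c =>
        show ULe X Y m _ _
        rw [UParent_inr, dif_pos (Uparent_exists X Y c)]
        exact Q_parent_le X Y (Uparent_exists X Y c).choose_spec hzz'
    | inr c =>
      cases z' with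
      | inl x =>
        show ULe X Y m _ _
        rw [UParent_inr, dif_pos (Uparent_exists X Y c)]
        exact Q_parent_ge X Y c.2 (Uparent_exists X Y c).choose_spec hzz'
      | inr c' =>
        rw [show c' = c from ULev_inr_sub X Y c' c]
        exact ULe_refl X Y m _
  root_nonempty := by
    obtain ⟨r⟩ := X.B.root_nonempty
    exact ⟨Sum.inl r⟩
  root_subsingleton z z' := by
    cases z with
    | inl x =>
      cases z' with
      | inl x' => exact congrArg Sum.inl (X.B.root_subsingleton x x')
      | inr c => exact absurd (Y.new_level c.2) (by have := Y.one_le_k; omega)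
    | inr c => exact absurd (Y.new_level c.2) (by have := Y.one_le_k; omega)
  bounded := by
    obtain ⟨N, hN⟩ := X.B.bounded
    refine ⟨max N (Y.k + 1), fun m hm => ⟨?_⟩⟩
    rintro (x | c)
    · exact (hN m (le_trans (le_max_left _ _) hm)).false x
    · have := Y.new_level c.2
      have := le_max_right N (Y.k + 1)
      omega

end OnePt

namespace OnePt

variable {A : PTree}

attribute [local instance] Classical.propDecidable

/-- The inclusion of `X.B` in the union tree. -/
noncomputable def Ui (X Y : OnePt A) : TreeHom X.B (UTree X Y) where
  app m x := Sum.inl x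
  mono m x y h := h
  parent_comm m x := rfl

/-- The underlying map of the inclusion of `Y.B` in the union tree. -/
noncomputable def UjApp (X Y : OnePt A) (m : ℕ) (c : Y.B.level m) : ULev X Y m :=
  if h : ∃ a, Y.incl.app m a = c then Sum.inl (X.incl.app m h.choose)
  else Sum.inr ⟨c, fun a ha => h ⟨a, ha⟩⟩

lemma UjApp_f (X Y : OnePt A) (m : ℕ) (a : A.level m) :
    UjApp X Y m (Y.incl.app m a) = Sum.inl (X.incl.app m a) := by
  rw [UjApp, dif_pos (⟨a, rfl⟩ : ∃ a', Y.incl.app m a' = Y.incl.app m a)]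
  exact congrArg _ (congrArg _ (Y.inj m
    (⟨a, rfl⟩ : ∃ a', Y.incl.app m a' = Y.incl.app m a).choose_spec))

lemma UjApp_new (X Y : OnePt A) {m : ℕ} (c : Y.B.level m) (hc : IsNew Y.incl m c) :
    UjApp X Y m c = Sum.inr ⟨c, hc⟩ := by
  rw [UjApp, dif_neg (fun h => hc h.choose h.choose_spec)]

/-- The inclusion of `Y.B` in the union tree. -/
noncomputable def Uj (X Y : OnePt A) : TreeHom Y.B (UTree X Y) where
  app := UjApp X Y
  mono m c c' hcc' := by
    show ULe X Y m (UjApp X Y m c) (UjApp X Y m c')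
    by_cases hc : ∃ a, Y.incl.app m a = c <;> by_cases hc' : ∃ a, Y.incl.app m a = c'
    · obtain ⟨a, rfl⟩ := hc
      obtain ⟨a', rfl⟩ := hc'
      rw [UjApp_f, UjApp_f]
      show X.incl.app m a ≤ X.incl.app m a'
      exact (PTree.hom_le_iff X.incl X.inj m _ _).mpr
        ((PTree.hom_le_iff Y.incl Y.inj m _ _).mp hcc')
    · obtain ⟨a, rfl⟩ := hc
      have hcn' : IsNew Y.incl m c' := fun a ha => hc' ⟨a, ha⟩
      rw [UjApp_f, UjApp_new X Y c' hcn']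
      show QQ X Y m (X.incl.app m a) c'
      exact (Q_f X Y hcn' a).mpr (lt_of_le_of_ne hcc' (hcn' a))
    · obtain ⟨a', rfl⟩ := hc'
      have hcn : IsNew Y.incl m c := fun a ha => hc ⟨a, ha⟩
      rw [UjApp_new X Y c hcn, UjApp_f]
      show ¬ QQ X Y m (X.incl.app m a') c
      intro hq
      have h1 : Y.incl.app m a' < c := (Q_f X Y hcn a').mp hq
      exact absurd (lt_of_le_of_lt hcc' h1) (lt_irrefl c)
    · have hcn : IsNew Y.incl m c := fun a ha => hc ⟨a, ha⟩
      have hcn' : IsNew Y.incl m c' := fun a ha => hc' ⟨a, ha⟩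
      rw [UjApp_new X Y c hcn, UjApp_new X Y c' hcn']
      trivial
  parent_comm m c := by
    show UParent X Y m (UjApp X Y (m + 1) c) = UjApp X Y m (Y.B.parent m c)
    by_cases hc : ∃ a, Y.incl.app (m + 1) a = c
    · obtain ⟨a, rfl⟩ := hc
      rw [UjApp_f]
      show Sum.inl (X.B.parent m (X.incl.app (m + 1) a)) = _
      rw [X.incl.parent_comm, Y.incl.parent_comm, UjApp_f]
    · have hcn : IsNew Y.incl (m + 1) c := fun a ha => hc ⟨a, ha⟩
      rw [UjApp_new X Y c hcn, UParent_inr]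
      have hex : ∃ a, Y.incl.app m a = Y.B.parent m c :=
        Uparent_exists X Y ⟨c, hcn⟩
      rw [dif_pos hex, UjApp, dif_pos hex]

lemma union_exists (X Y : OnePt A) :
    ∃ (D : PTree) (i : TreeHom X.B D) (j : TreeHom Y.B D), IsUnion X.incl Y.incl i j := by
  refine ⟨UTree X Y, Ui X Y, Uj X Y, ?_, ?_, ?_, ?_, ?_⟩
  · apply TreeHom.ext'
    funext m a
    show Sum.inl (X.incl.app m a) = UjApp X Y m (Y.incl.app m a)
    rw [UjApp_f]
  · intro m x y h
    exact Sum.inl.inj h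
  · intro m c c' h
    replace h : UjApp X Y m c = UjApp X Y m c' := h
    by_cases hc : ∃ a, Y.incl.app m a = c <;> by_cases hc' : ∃ a, Y.incl.app m a = c'
    · obtain ⟨a, rfl⟩ := hc
      obtain ⟨a', rfl⟩ := hc'
      rw [UjApp_f, UjApp_f] at h
      exact congrArg (Y.incl.app m) (X.inj m (Sum.inl.inj h))
    · obtain ⟨a, rfl⟩ := hc
      rw [UjApp_f, UjApp_new X Y c' (fun a ha => hc' ⟨a, ha⟩)] at h
      exact absurd h (by simp)
    · obtain ⟨a', rfl⟩ := hc'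
      rw [UjApp_f, UjApp_new X Y c (fun a ha => hc ⟨a, ha⟩)] at h
      exact absurd h (by simp)
    · exact Y.new_uniq' (fun a ha => hc ⟨a, ha⟩) (fun a ha => hc' ⟨a, ha⟩)
  · intro m d
    cases d with
    | inl x => exact Or.inl ⟨x, rfl⟩
    | inr c =>
      refine Or.inr ⟨c.1, ?_⟩
      show UjApp X Y m c.1 = Sum.inr c
      rw [UjApp_new X Y c.1 c.2]
  · intro m b' c' h
    replace h : Sum.inl b' = UjApp X Y m c' := h
    by_cases hc : ∃ a, Y.incl.app m a = c'
    · obtain ⟨a, rfl⟩ := hc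
      rw [UjApp_f] at h
      exact ⟨a, (Sum.inl.inj h).symm, rfl⟩
    · rw [UjApp_new X Y c' (fun a ha => hc ⟨a, ha⟩)] at h
      exact absurd h (by simp)

end OnePt

namespace OnePt

variable {A : PTree}

/-- The comparison relation on one-point extensions in terms of cuts and levels. -/
def Rr (X Y : OnePt A) : Prop :=
  X.cut' X.k X.newb ⊂ Y.cut' Y.k Y.newb ∨
    (X.cut' X.k X.newb = Y.cut' Y.k Y.newb ∧ Y.k < X.k)

lemma not_iso_of_R {X Y : OnePt A} (hR : Rr X Y) : ¬ OnePtIso X Y := by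
  intro hiso
  obtain ⟨hkl, hcut⟩ := data_of_iso hiso X.newb_new Y.newb_new
  rcases hR with h | ⟨hcut', hlt⟩
  · rw [hcut] at h
    exact absurd h (lt_irrefl _)
  · omega

lemma ltdot_of_R {X Y : OnePt A} (hR : Rr X Y) : X.ltdot Y := by
  refine ⟨not_iso_of_R hR, ?_⟩
  intro D i j hU k l b c hb hc
  have hk : k = X.k := X.new_level hb
  subst hk
  have hl : l = Y.k := Y.new_level hc
  subst hl
  rw [X.newb_uniq hb, Y.newb_uniq hc]
  rcases hR with h | ⟨hcut, hlt⟩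
  · exact prec_of_cut_ssubset hU X.newb_new h
  · exact prec_of_cut_eq_gt hU X.newb_new hcut hlt

lemma R_or_iso_or (X Y : OnePt A) : Rr X Y ∨ OnePtIso X Y ∨ Rr Y X := by
  by_cases heq : X.cut' X.k X.newb = Y.cut' Y.k Y.newb
  · rcases Nat.lt_trichotomy X.k Y.k with h | h | h
    · exact Or.inr (Or.inr (Or.inr ⟨heq.symm, h⟩))
    · exact Or.inr (Or.inl (iso_of_data_eq X.newb_new Y.newb_new h heq))
    · exact Or.inl (Or.inr ⟨heq, h⟩)
  · rcases cut'_comparable X Y X.k Y.k X.newb Y.newb with h | h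
    · exact Or.inl (Or.inl (h.ssubset_of_ne heq))
    · exact Or.inr (Or.inr (Or.inl (h.ssubset_of_ne (fun h' => heq h'.symm))))

lemma R_of_ltdot {X Y : OnePt A} (h : X.ltdot Y) : Rr X Y := by
  obtain ⟨hniso, hprec⟩ := h
  obtain ⟨D, i, j, hU⟩ := union_exists X Y
  have hp := hprec D i j hU X.k Y.k X.newb Y.newb X.newb_new Y.newb_new
  rcases R_or_iso_or X Y with h | h | h
  · exact h
  · exact absurd h hniso
  · have hp2 := (ltdot_of_R h).2 D j i (union_symm hU) Y.k X.k Y.newb X.newb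
      Y.newb_new X.newb_new
    exact absurd hp2 (D.prec_asymm hp)

lemma R_trans {X Y Z : OnePt A} (h1 : Rr X Y) (h2 : Rr Y Z) : Rr X Z := by
  rcases h1 with h1 | ⟨h1, h1'⟩ <;> rcases h2 with h2 | ⟨h2, h2'⟩
  · exact Or.inl (h1.trans h2)
  · exact Or.inl (h2 ▸ h1)
  · exact Or.inl (h1 ▸ h2)
  · exact Or.inr ⟨h1.trans h2, h2'.trans h1'⟩

end OnePt


/-- The relation `⋖` is a strict linear order on `𝓛(A)` (where two
one-point extensions are regarded as equal when they are isomorphic under `A`):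
it is transitive, asymmetric, and any two extensions are comparable or equal. -/
theorem stmt_11 (A : PTree) :
    (∀ X Y Z : OnePt A, X.ltdot Y → Y.ltdot Z → X.ltdot Z) ∧
    (∀ X Y : OnePt A, X.ltdot Y → ¬ Y.ltdot X) ∧
    (∀ X Y : OnePt A, X.ltdot Y ∨ OnePtIso X Y ∨ Y.ltdot X) := by

  refine ⟨fun X Y Z h1 h2 =>
    OnePt.ltdot_of_R (OnePt.R_trans (OnePt.R_of_ltdot h1) (OnePt.R_of_ltdot h2)),
    fun X Y h1 h2 => ?_,
    fun X Y => ?_⟩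
  · obtain ⟨D, i, j, hU⟩ := OnePt.union_exists X Y
    have hp1 := h1.2 D i j hU X.k Y.k X.newb Y.newb X.newb_new Y.newb_new
    have hp2 := h2.2 D j i (OnePt.union_symm hU) Y.k X.k Y.newb X.newb Y.newb_new X.newb_new
    exact absurd hp2 (D.prec_asymm hp1)
  · rcases OnePt.R_or_iso_or X Y with h | h | h
    · exact Or.inl (OnePt.ltdot_of_R h)
    · exact Or.inr (Or.inl h)
    · exact Or.inr (Or.inr (OnePt.ltdot_of_R h))
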